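/- Let D be a strongly connected digraph and v ∈ V(D). For each integer i ≥ 0 let L_i^- = {x ∈ V(D) : dist_D(x,v) = i} be the i-th in-BFS layer to v. Then χ⃗(D) ≤ 2·max_{i ≥ 0} χ⃗(D[L_i^-]). -/

import Mathlib

/-- A digraph on vertex type `V` is modeled as an arc relation `A : V → V → Prop`.
`Induce A X` is the arc relation of the induced subdigraph `D[X]`. -/
def Induce {V : Type*} (A : V → V → Prop) (X : Set V) : V → V → Prop :=
  fun u v => u ∈ X ∧ v ∈ X ∧ A u v

/-- `l` is (the vertex list of) a directed cycle: at least 2 vertices, consecutive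
vertices joined by arcs, all vertices distinct, and an arc from the last vertex back
to the first. Its length (number of arcs) is `l.length`. -/
def IsDicycleList {V : Type*} (A : V → V → Prop) (l : List V) : Prop :=
  2 ≤ l.length ∧ l.Chain' A ∧ l.Nodup ∧
    ∃ x y, l.getLast? = some x ∧ l.head? = some y ∧ A x y

/-- The digraph has no directed cycle. -/
def AcyclicRel {V : Type*} (A : V → V → Prop) : Prop :=
  ¬ ∃ l : List V, IsDicycleList A l

/-- The dichromatic number: the least `k` such that the vertices can be colored with
`k` colors so that each color class induces an acyclic subdigraph. -/
noncomputable def dichrom {V : Type*} (A : V → V → Prop) : ℕ :=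
  sInf {k | ∃ f : V → Fin k, ∀ i, AcyclicRel (Induce A {v | f v = i})}

/-- `l` is a directed path from `x` to `y` (possibly of length zero, i.e. `l = [x]`).
Its length (number of arcs) is `l.length - 1`. -/
def IsDipathFromTo {V : Type*} (A : V → V → Prop) (x y : V) (l : List V) : Prop :=
  l.Chain' A ∧ l.Nodup ∧ l.head? = some x ∧ l.getLast? = some y

/-- Directed distance from `x` to `y`: length of a shortest directed path. -/
noncomputable def ddist {V : Type*} (A : V → V → Prop) (x y : V) : ℕ :=
  sInf {n | ∃ l, IsDipathFromTo A x y l ∧ l.length = n + 1}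

/-- The digraph is strongly connected. -/
def StronglyConnectedRel {V : Type*} (A : V → V → Prop) : Prop :=
  ∀ x y : V, ∃ l, IsDipathFromTo A x y l

/-- The induced subdigraph `D[X]` is strongly connected. -/
def StronglyConnectedOn {V : Type*} (A : V → V → Prop) (X : Set V) : Prop :=
  ∀ x ∈ X, ∀ y ∈ X, ∃ l, IsDipathFromTo (Induce A X) x y l

/-- `X` is a strongly connected component: a maximal nonempty set inducing a strongly
connected subdigraph. -/
def IsSCC {V : Type*} (A : V → V → Prop) (X : Set V) : Prop :=
  X.Nonempty ∧ StronglyConnectedOn A X ∧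
    ∀ Y : Set V, X ⊆ Y → StronglyConnectedOn A Y → Y = X

/-- The internal vertices of a path given as a vertex list. -/
def Internal {V : Type*} (l : List V) : List V := l.dropLast.tail

/-- `D = (V, A)` contains a subdivision of `F = (W, B)` in which the subdivision path
of each arc `(u,v)` has length (number of arcs) satisfying the predicate `len u v`:
there are pairwise distinct branch vertices `b w`, and for each arc of `F` a directed
path of positive length between the corresponding branch vertices, these paths being
pairwise internally disjoint and internally avoiding all branch vertices. -/
def IsSubdivisionWith {V W : Type*} (A : V → V → Prop) (B : W → W → Prop)
    (len : W → W → ℕ → Prop) : Prop :=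
  ∃ b : W → V, Function.Injective b ∧
  ∃ P : ∀ u v, B u v → List V,
    (∀ u v (h : B u v), IsDipathFromTo A (b u) (b v) (P u v h) ∧
      2 ≤ (P u v h).length ∧ len u v ((P u v h).length - 1)) ∧
    (∀ u v (h : B u v), ∀ x ∈ Internal (P u v h),
      (∀ w : W, x ≠ b w) ∧
      ∀ u' v' (h' : B u' v'), (u, v) ≠ (u', v') → x ∉ P u' v' h')


/-!
Let `d x` be the distance from `x` to `v`. Along an arc `u → w` we have `d u ≤ d w + 1`, so if
`u` and `w` also lie in in-BFS layers of the same parity, then `d u ≤ d w`. Colour `x` by the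
parity of `d x` together with its colour in an optimal colouring of its own layer. Around a
monochromatic directed cycle `d` is then non-decreasing, hence constant, so the cycle lies in a
single layer and is monochromatic in that layer's colouring, which is impossible.
-/

section Acyclic

variable {V : Type*} {A : V → V → Prop}

theorem IsDicycleList.mono {B : V → V → Prop} (hAB : ∀ a b, A a b → B a b) {l : List V}
    (hl : IsDicycleList A l) : IsDicycleList B l := by
  obtain ⟨hlen, hchain, hnodup, x, y, hx, hy, hxy⟩ := hl
  exact ⟨hlen, hchain.imp fun a b => hAB a b, hnodup, x, y, hx, hy, hAB x y hxy⟩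

theorem AcyclicRel.mono {B : V → V → Prop} (hAB : ∀ a b, A a b → B a b) (hB : AcyclicRel B) :
    AcyclicRel A :=
  fun ⟨l, hl⟩ => hB ⟨l, hl.mono hAB⟩

theorem acyclicRel_induce_of_subsingleton {X : Set V} (hX : X.Subsingleton) :
    AcyclicRel (Induce A X) := by
  rintro ⟨l, hlen, hchain, hnodup, -⟩
  obtain ⟨a, b, t, rfl⟩ : ∃ a b t, l = a :: b :: t := by
    match l, hlen with | a :: b :: t, _ => exact ⟨a, b, t, rfl⟩
  have hab : Induce A X a b := (List.isChain_cons_cons.mp hchain).1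
  exact (List.nodup_cons.mp hnodup).1 (hX hab.1 hab.2.1 ▸ List.mem_cons_self)

theorem AcyclicRel.of_monotone_levels {α : Type*} [PartialOrder α] (d : V → α)
    (hmono : ∀ a b, A a b → d a ≤ d b) (hlevel : ∀ c, AcyclicRel (Induce A {x | d x = c})) :
    AcyclicRel A := by
  rintro ⟨l, hlen, hchain, hnodup, x, y, hx, hy, hxy⟩
  obtain ⟨t, rfl⟩ : ∃ t, l = y :: t := by
    cases l with
    | nil => simp at hy
    | cons a t => simp only [List.head?_cons, Option.some.injEq] at hy; exact ⟨t, hy ▸ rfl⟩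
  -- closing the cycle, `y :: t ++ [y]` is a chain along which `d` is monotone
  have hclosed : (y :: t ++ [y]).Pairwise (fun a b => d a ≤ d b) := by
    refine List.isChain_iff_pairwise.mp (List.isChain_append.mpr ⟨?_, by simp, ?_⟩)
    · exact hchain.imp fun a b => hmono a b
    · simp only [hx, Option.mem_def, Option.some.injEq, List.head?_cons]
      rintro _ rfl _ rfl
      exact hmono _ _ hxy
  have hlevel_y : ∀ z ∈ y :: t, d z = d y := by
    intro z hz
    refine le_antisymm ((List.pairwise_append.mp hclosed).2.2 z hz y (by simp)) ?_
    rcases List.mem_cons.mp hz with rfl | hz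
    · rfl
    · exact (List.pairwise_cons.mp hclosed).1 z (by simp [hz])
  refine hlevel (d y) ⟨y :: t, hlen, ?_, hnodup, x, y, hx, hy, ?_⟩
  · exact (List.IsChain.iff_mem.mp hchain).imp fun a b ⟨ha, hb, hab⟩ =>
      ⟨hlevel_y a ha, hlevel_y b hb, hab⟩
  · exact ⟨hlevel_y x (List.mem_of_getLast? hx), rfl, hxy⟩

end Acyclic

section Dichromatic

variable {V : Type*} {A : V → V → Prop}

theorem exists_coloring_fin_card [Finite V] :
    ∃ f : V → Fin (Nat.card V), ∀ i, AcyclicRel (Induce A {v | f v = i}) :=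
  ⟨Finite.equivFin V, fun _ => acyclicRel_induce_of_subsingleton fun _ ha _ hb =>
    (Finite.equivFin V).injective (ha.trans hb.symm)⟩

theorem dichrom_le_card [Finite V] : dichrom A ≤ Nat.card V :=
  Nat.sInf_le exists_coloring_fin_card

theorem dichrom_le_of_coloring {ι : Type*} [Fintype ι] (f : V → ι)
    (hf : ∀ i, AcyclicRel (Induce A {v | f v = i})) : dichrom A ≤ Fintype.card ι := by
  refine Nat.sInf_le ⟨fun v => Fintype.equivFin ι (f v), fun j => ?_⟩
  simpa only [Equiv.eq_symm_apply] using hf ((Fintype.equivFin ι).symm j)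

theorem exists_coloring_of_dichrom_le [Finite V] {k : ℕ} (hk : dichrom A ≤ k) :
    ∃ f : V → Fin k, ∀ i, AcyclicRel (Induce A {v | f v = i}) := by
  obtain ⟨f, hf⟩ : ∃ f : V → Fin (dichrom A), ∀ i, AcyclicRel (Induce A {v | f v = i}) :=
    Nat.sInf_mem (s := {k | ∃ f : V → Fin k, ∀ i, AcyclicRel (Induce A {v | f v = i})})
      ⟨_, exists_coloring_fin_card⟩
  refine ⟨fun v => Fin.castLE hk (f v), fun i ⟨l, hl⟩ => ?_⟩
  obtain ⟨x, -, -, -, ⟨hx : Fin.castLE hk (f x) = i, -⟩⟩ := hl.2.2.2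
  have hclass : {v | Fin.castLE hk (f v) = i} = {v | f v = f x} := by
    ext v
    simp only [← hx, Fin.castLE_inj]
  exact hf (f x) ⟨l, hclass ▸ hl⟩

end Dichromatic

section Distance

variable {V : Type*} {A : V → V → Prop} {u w x y : V} {l : List V}

theorem IsDipathFromTo.ne_nil (h : IsDipathFromTo A x y l) : l ≠ [] := by
  rintro rfl
  simp [IsDipathFromTo] at h

theorem IsDipathFromTo.cons (h : IsDipathFromTo A w y l) (huw : A u w) (hu : u ∉ l) :
    IsDipathFromTo A u y (u :: l) := by
  obtain ⟨hchain, hnodup, hw, hy⟩ := h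
  refine ⟨hchain.cons (by simpa [hw] using huw), List.nodup_cons.mpr ⟨hu, hnodup⟩, rfl, ?_⟩
  simp [List.getLast?_cons, hy]

theorem IsDipathFromTo.of_append_cons {s t : List V} (h : IsDipathFromTo A x y (s ++ u :: t)) :
    IsDipathFromTo A u y (u :: t) := by
  obtain ⟨hchain, hnodup, -, hy⟩ := h
  exact ⟨hchain.suffix (List.suffix_append s _), hnodup.of_append_right, rfl,
    (List.getLast?_append_cons s u t).symm.trans hy⟩

theorem ddist_add_one_le (h : IsDipathFromTo A x y l) : ddist A x y + 1 ≤ l.length := by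
  have := List.length_pos_iff.mpr h.ne_nil
  have : ddist A x y ≤ l.length - 1 := Nat.sInf_le ⟨l, h, by omega⟩
  omega

theorem exists_isDipathFromTo_length_eq_ddist (h : ∃ l, IsDipathFromTo A x y l) :
    ∃ l, IsDipathFromTo A x y l ∧ l.length = ddist A x y + 1 := by
  obtain ⟨l, hl⟩ := h
  have := List.length_pos_iff.mpr hl.ne_nil
  exact Nat.sInf_mem (s := {n | ∃ l, IsDipathFromTo A x y l ∧ l.length = n + 1})
    ⟨l.length - 1, l, hl, by omega⟩

/-- Prepend `u` to a shortest path from `w`, or, if it already passes through `u`, cut it there. -/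
theorem ddist_le_ddist_add_one (hw : ∃ l, IsDipathFromTo A w y l) (huw : A u w) :
    ddist A u y ≤ ddist A w y + 1 := by
  obtain ⟨l, hl, hlen⟩ := exists_isDipathFromTo_length_eq_ddist hw
  by_cases hu : u ∈ l
  · obtain ⟨s, t, rfl⟩ := List.append_of_mem hu
    have := ddist_add_one_le hl.of_append_cons
    simp only [List.length_append, List.length_cons] at hlen this
    omega
  · have := ddist_add_one_le (hl.cons huw hu)
    simp only [List.length_cons] at this
    omega

end Distance

/-- In-BFS layering bound on the dichromatic number. -/
theorem stmt_2 {V : Type*} [Fintype V] (A : V → V → Prop)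
    (hSC : StronglyConnectedRel A) (v : V) :
    dichrom A ≤ 2 * sSup {n | ∃ i : ℕ, n = dichrom (Induce A {x | ddist A x v = i})} := by
  set M := sSup {n | ∃ i : ℕ, n = dichrom (Induce A {x | ddist A x v = i})}
  set d : V → ℕ := fun x => ddist A x v
  have hlayer (i : ℕ) : dichrom (Induce A {x | d x = i}) ≤ M :=
    le_csSup ⟨Nat.card V, by rintro _ ⟨j, rfl⟩; exact dichrom_le_card⟩ ⟨i, rfl⟩
  choose g hg using fun i => exists_coloring_of_dichrom_le (hlayer i)
  let f : V → Fin 2 × Fin M := fun x => (⟨d x % 2, Nat.mod_lt _ two_pos⟩, g (d x) x)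
  have hup (a b : V) (hf : f a = f b) (hab : A a b) : d a ≤ d b := by
    have hparity : d a % 2 = d b % 2 := congrArg (fun c => c.1.val) hf
    have : d a ≤ d b + 1 := ddist_le_ddist_add_one (hSC b v) hab
    omega
  calc dichrom A ≤ Fintype.card (Fin 2 × Fin M) := dichrom_le_of_coloring f fun c => ?_
    _ = 2 * M := by simp
  refine AcyclicRel.of_monotone_levels d
    (fun a b hab => hup a b (hab.1.trans hab.2.1.symm) hab.2.2) fun i => (hg i c.2).mono ?_
  rintro a b ⟨rfl, hb, hfa, hfb, hab⟩
  exact ⟨congrArg Prod.snd hfa, hb ▸ congrArg Prod.snd hfb, rfl, hb, hab⟩
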